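/- arXiv:2307.04990 — 5 statements merged into one kernel-verified Lean document; each statement's English description precedes it below -/
import Mathlib

section
/- Let 0 < m ≤ 1, let d, n be positive integers, let k_1, …, k_n be positive integers, and let A_i ∈ ℝ^{d × k_i} for i = 1, …, n. Define Â_i = min{√(1−m)/‖A_i‖₂, 1} · A_i (with Â_i = A_i when A_i = 0), and define the block matrix Φ ∈ ℝ^{K × K} with K = Σ_i k_i by Φ_{ij} = −Â_i^T Â_j for i ≠ j and Φ_{ii} = 0. Then (1) every diagonal block Φ_{ii} is the zero matrix, and (2) I − Φ ⪰ mI, i.e., x^T (I − Φ) x ≥ m‖x‖₂² for all x ∈ ℝ^K. -/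
/-!
Write `xᵢ` for the blocks of `x` and `B = [Â₁ ⋯ Âₙ]` for the block row. Then `Φ` is the
block-diagonal part of the Gram matrix `BᵀB` minus `BᵀB` itself, so
`xᵀ(I - Φ)x = ‖x‖² - ∑ᵢ ‖Âᵢxᵢ‖² + ‖Bx‖²`. The last term is nonnegative and the
normalization gives `‖Âᵢ‖₂² ≤ 1 - m`, so `∑ᵢ ‖Âᵢxᵢ‖² ≤ (1 - m)‖x‖²`.
-/

open Matrix

/-- The spectral norm (ℓ₂→ℓ₂ operator norm) of a real matrix. -/
noncomputable def specNorm {m n : Type*} [Fintype m] [Fintype n] [DecidableEq n]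
    (A : Matrix m n ℝ) : ℝ :=
  ‖LinearMap.toContinuousLinearMap (Matrix.toEuclideanLin A)‖

/-- The spectrally normalized version `Â = min{√(1−m)/‖A‖₂, 1} · A` of a matrix.
(When `A = 0` this equals `A`, matching the convention `Â = A` in that case.) -/
noncomputable def hatA {d k : ℕ} (m : ℝ) (A : Matrix (Fin d) (Fin k) ℝ) :
    Matrix (Fin d) (Fin k) ℝ :=
  (min (Real.sqrt (1 - m) / specNorm A) 1) • A

open scoped Matrix.Norms.L2Operator

lemma specNorm_eq_norm {r c : Type*} [Fintype r] [Fintype c] [DecidableEq c]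
    (A : Matrix r c ℝ) : specNorm A = ‖A‖ := rfl

lemma dotProduct_self_eq_norm_sq {c : Type*} [Fintype c] (v : c → ℝ) :
    v ⬝ᵥ v = ‖WithLp.toLp 2 v‖ ^ 2 := by
  rw [EuclideanSpace.norm_sq_eq]
  simp [dotProduct, sq]

lemma dotProduct_mulVec_self_le {r c : Type*} [Fintype r] [Fintype c] [DecidableEq c]
    (A : Matrix r c ℝ) (v : c → ℝ) :
    (A *ᵥ v) ⬝ᵥ (A *ᵥ v) ≤ ‖A‖ ^ 2 * (v ⬝ᵥ v) := by
  rw [dotProduct_self_eq_norm_sq, dotProduct_self_eq_norm_sq, ← mul_pow]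
  exact pow_le_pow_left₀ (norm_nonneg _) (A.l2_opNorm_mulVec (WithLp.toLp 2 v)) 2

lemma norm_hatA_le {d k : ℕ} {m : ℝ} (A : Matrix (Fin d) (Fin k) ℝ) :
    ‖hatA m A‖ ≤ √(1 - m) := by
  rw [hatA, norm_smul, specNorm_eq_norm, Real.norm_of_nonneg (by positivity)]
  rcases (norm_nonneg A).eq_or_lt with hA | hA
  · simp [← hA]
  · calc min (√(1 - m) / ‖A‖) 1 * ‖A‖ ≤ √(1 - m) / ‖A‖ * ‖A‖ := by
          gcongr
          exact min_le_left _ _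
      _ = √(1 - m) := div_mul_cancel₀ _ hA.ne'

lemma dotProduct_transpose_mul_self_mulVec {r c R : Type*} [Fintype r] [Fintype c]
    [CommSemiring R] (B : Matrix r c R) (x : c → R) :
    x ⬝ᵥ (Bᵀ * B) *ᵥ x = (B *ᵥ x) ⬝ᵥ (B *ᵥ x) := by
  rw [← mulVec_mulVec, dotProduct_mulVec, vecMul_transpose]

section Blocks

variable {ι r R : Type*} {κ : ι → Type*}

/-- The block row `[B₁ ⋯ Bₙ]`. -/
def blockRow (B : ∀ i, Matrix r (κ i) R) : Matrix r (Σ i, κ i) R :=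
  of fun a p => B p.1 a p.2

section DotProduct

variable [Fintype ι] [∀ i, Fintype (κ i)] [NonUnitalNonAssocSemiring R]

lemma dotProduct_sigma (x y : (Σ i, κ i) → R) :
    x ⬝ᵥ y = ∑ i, (fun a => x ⟨i, a⟩) ⬝ᵥ fun a => y ⟨i, a⟩ := by
  simp [dotProduct, Fintype.sum_sigma]

lemma dotProduct_blockDiagonal'_mulVec [DecidableEq ι] (M : ∀ i, Matrix (κ i) (κ i) R)
    (x : (Σ i, κ i) → R) :
    x ⬝ᵥ blockDiagonal' M *ᵥ x = ∑ i, (fun a => x ⟨i, a⟩) ⬝ᵥ M i *ᵥ fun a => x ⟨i, a⟩ := by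
  rw [dotProduct_sigma]
  congr! 2 with i
  ext a
  simp [mulVec, dotProduct, Fintype.sum_sigma, blockDiagonal'_apply]

end DotProduct

variable [DecidableEq ι] [Fintype r]

/-- The block matrix with blocks `-Bᵢᵀ Bⱼ` off the diagonal and `0` on it. -/
def offDiagGram [CommRing R] (B : ∀ i, Matrix r (κ i) R) : Matrix (Σ i, κ i) (Σ i, κ i) R :=
  blockDiagonal' (fun i => (B i)ᵀ * B i) - (blockRow B)ᵀ * blockRow B

lemma offDiagGram_apply [CommRing R] (B : ∀ i, Matrix r (κ i) R) (i j : ι) (a : κ i)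
    (c : κ j) : offDiagGram B ⟨i, a⟩ ⟨j, c⟩ = if i = j then 0 else -((B i)ᵀ * B j) a c := by
  by_cases h : i = j
  · subst h
    simp only [offDiagGram, Matrix.sub_apply, blockDiagonal'_apply_eq, mul_apply,
      transpose_apply, blockRow, of_apply, sub_self, if_true]
  · simp only [offDiagGram, Matrix.sub_apply, blockDiagonal'_apply_ne _ _ _ h, mul_apply,
      transpose_apply, blockRow, of_apply, zero_sub, if_neg h]

variable [Fintype ι] [∀ i, Fintype (κ i)]

lemma dotProduct_offDiagGram_mulVec [CommRing R] (B : ∀ i, Matrix r (κ i) R)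
    (x : (Σ i, κ i) → R) :
    x ⬝ᵥ offDiagGram B *ᵥ x = ∑ i, (B i *ᵥ fun a => x ⟨i, a⟩) ⬝ᵥ (B i *ᵥ fun a => x ⟨i, a⟩) -
      (blockRow B *ᵥ x) ⬝ᵥ (blockRow B *ᵥ x) := by
  simp only [offDiagGram, sub_mulVec, dotProduct_sub, dotProduct_blockDiagonal'_mulVec,
    dotProduct_transpose_mul_self_mulVec]

theorem one_sub_sq_mul_dotProduct_le [∀ i, DecidableEq (κ i)] (B : ∀ i, Matrix r (κ i) ℝ)
    {s : ℝ} (hB : ∀ i, ‖B i‖ ≤ s) (x : (Σ i, κ i) → ℝ) :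
    (1 - s ^ 2) * (x ⬝ᵥ x) ≤ x ⬝ᵥ (1 - offDiagGram B) *ᵥ x := by
  have hblocks : ∑ i, (B i *ᵥ fun a => x ⟨i, a⟩) ⬝ᵥ (B i *ᵥ fun a => x ⟨i, a⟩) ≤
      s ^ 2 * (x ⬝ᵥ x) := by
    rw [dotProduct_sigma, Finset.mul_sum]
    gcongr with i
    exact (dotProduct_mulVec_self_le _ _).trans
      (by gcongr; exacts [dotProduct_self_star_nonneg _, hB i])
  have hrow : 0 ≤ (blockRow B *ᵥ x) ⬝ᵥ (blockRow B *ᵥ x) := dotProduct_self_star_nonneg _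
  rw [sub_mulVec, one_mulVec, dotProduct_sub, dotProduct_offDiagGram_mulVec]
  linarith

end Blocks

theorem stmt0_general {n d : ℕ} (m : ℝ) (hm1 : m ≤ 1)
    (k : Fin n → ℕ)
    (A : (i : Fin n) → Matrix (Fin d) (Fin (k i)) ℝ)
    (Φ : Matrix ((i : Fin n) × Fin (k i)) ((i : Fin n) × Fin (k i)) ℝ)
    (hΦ : ∀ (i j : Fin n) (a : Fin (k i)) (c : Fin (k j)),
        Φ ⟨i, a⟩ ⟨j, c⟩ =
          if i = j then 0 else -(((hatA m (A i))ᵀ * hatA m (A j)) a c)) :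
    (∀ (i : Fin n) (a c : Fin (k i)), Φ ⟨i, a⟩ ⟨i, c⟩ = 0) ∧
    (∀ x : ((i : Fin n) × Fin (k i)) → ℝ,
        m * (x ⬝ᵥ x) ≤ x ⬝ᵥ ((1 - Φ).mulVec x)) := by
  refine ⟨fun i a c => by simp [hΦ], fun x => ?_⟩
  have hΦ_eq : Φ = offDiagGram fun i => hatA m (A i) := by
    ext ⟨i, a⟩ ⟨j, c⟩
    rw [hΦ, offDiagGram_apply]
  have key := one_sub_sq_mul_dotProduct_le (fun i => hatA m (A i)) (fun i => norm_hatA_le (A i)) x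
  rwa [Real.sq_sqrt (sub_nonneg.2 hm1), sub_sub_cancel, ← hΦ_eq] at key

theorem stmt0 {n d : ℕ} (hn : 0 < n) (hd : 0 < d) (m : ℝ) (hm0 : 0 < m) (hm1 : m ≤ 1)
    (k : Fin n → ℕ) (hk : ∀ i, 0 < k i)
    (A : (i : Fin n) → Matrix (Fin d) (Fin (k i)) ℝ)
    (Φ : Matrix ((i : Fin n) × Fin (k i)) ((i : Fin n) × Fin (k i)) ℝ)
    (hΦ : ∀ (i j : Fin n) (a : Fin (k i)) (c : Fin (k j)),
        Φ ⟨i, a⟩ ⟨j, c⟩ =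
          if i = j then 0 else -(((hatA m (A i))ᵀ * hatA m (A j)) a c)) :
    (∀ (i : Fin n) (a c : Fin (k i)), Φ ⟨i, a⟩ ⟨i, c⟩ = 0) ∧
    (∀ x : ((i : Fin n) × Fin (k i)) → ℝ,
        m * (x ⬝ᵥ x) ≤ x ⬝ᵥ ((1 - Φ).mulVec x)) :=
  stmt0_general m hm1 k A Φ hΦ
end

section
/- Let m > 0 and let n, k be positive integers. Let Φ ∈ ℝ^{nk × nk} be a block matrix with k × k blocks Φ_{ij} (1 ≤ i, j ≤ n) satisfying x^T (I − Φ) x ≥ m‖x‖₂² for all x ∈ ℝ^{nk}, and let b_1, …, b_n ∈ ℝ^k. Then there exists a unique q = (q_1, …, q_n) with each q_i ∈ Δ_k such that q_i = softmax(Σ_{j=1}^n Φ_{ij} q_j + b_i) for every i = 1, …, n. -/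
open Matrix

/-- The probability simplex Δ_k in ℝ^k. -/
def simplex (k : ℕ) : Set (Fin k → ℝ) :=
  {z | (∀ i, 0 ≤ z i) ∧ ∑ i, z i = 1}

/-- The softmax function on ℝ^k. -/
noncomputable def softmax {k : ℕ} (x : Fin k → ℝ) : Fin k → ℝ :=
  fun i => Real.exp (x i) / ∑ j, Real.exp (x j)


open Real

/-- exp bound: `exp y ≤ 1 + y + y² exp|y|`. -/
lemma exp_le_quad (y : ℝ) : Real.exp y ≤ 1 + y + y ^ 2 * Real.exp |y| := by
  have key : ∀ z : ℝ, (1 - z) * Real.exp z ≤ 1 := by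
    intro z
    have h := Real.add_one_le_exp (-z)
    have h2 := mul_le_mul_of_nonneg_right h (Real.exp_pos z).le
    rw [← Real.exp_add] at h2
    simp only [neg_add_cancel, Real.exp_zero] at h2
    nlinarith
  rcases le_or_gt y 0 with h | h
  · -- exp y ≤ 1/(1-y) ≤ 1 + y + y^2 ≤ 1 + y + y^2 exp|y|
    have h1 : (1 - y) * Real.exp y ≤ 1 := key y
    have h2 : Real.exp y ≤ 1 + y + y ^ 2 := by nlinarith [Real.exp_pos y]
    have h3 : (1:ℝ) ≤ Real.exp |y| := Real.one_le_exp (abs_nonneg y)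
    nlinarith [sq_nonneg y]
  · have h1 : Real.exp y - 1 ≤ y * Real.exp y := by nlinarith [key y]
    have h2 : Real.exp y - 1 - y ≤ y * (Real.exp y - 1) := by nlinarith
    have h3 : Real.exp y - 1 - y ≤ y ^ 2 * Real.exp y := by nlinarith
    rw [abs_of_pos h] at *
    linarith

/-- uniqueness key: strong monotonicity of log on (0,1]. -/
lemma log_strong_mono {a b : ℝ} (ha0 : 0 < a) (ha1 : a ≤ 1) (hb0 : 0 < b) (hb1 : b ≤ 1) :
    (a - b) ^ 2 ≤ (Real.log a - Real.log b) * (a - b) := by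
  have key : ∀ x y : ℝ, 0 < x → x ≤ 1 → 0 < y → y ≤ x →
      (x - y) ^ 2 ≤ (Real.log x - Real.log y) * (x - y) := by
    intro x y hx0 hx1 hy0 hyx
    have h1 : Real.log (y / x) ≤ y / x - 1 := Real.log_le_sub_one_of_pos (by positivity)
    have h2 : Real.log (y / x) = Real.log y - Real.log x := Real.log_div (ne_of_gt hy0) (ne_of_gt hx0)
    have h3 : (x - y) / x ≤ Real.log x - Real.log y := by
      rw [h2] at h1
      have : y / x - 1 = -((x - y) / x) := by field_simp; ring
      linarith [h1.trans_eq this, neg_le_neg h1]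
    have h4 : x - y ≤ (x - y) / x := by
      rw [le_div_iff₀ hx0]; nlinarith
    nlinarith
  rcases le_total b a with h | h
  · exact key a b ha0 ha1 hb0 h
  · have := key b a hb0 hb1 ha0 h
    nlinarith [this]

open Real Set

/-- Strong-convexity tangent inequality for x log x on [0,1]:
for `b ∈ (0,1]` and `a ∈ [0,1]`,
`b log b + (log b + 1)(a-b) + (a-b)²/2 ≤ a log a`. -/
lemma mul_log_strong_tangent {b : ℝ} (hb0 : 0 < b) (hb1 : b ≤ 1)
    {a : ℝ} (ha0 : 0 ≤ a) (ha1 : a ≤ 1) :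
    b * Real.log b + (Real.log b + 1) * (a - b) + (a - b) ^ 2 / 2 ≤ a * Real.log a := by
  set F : ℝ → ℝ := fun x =>
    x * Real.log x - b * Real.log b - (Real.log b + 1) * (x - b) - (x - b) ^ 2 / 2 with hF
  have hFb : F b = 0 := by simp [hF]
  have hder : ∀ x : ℝ, 0 < x →
      HasDerivAt F (Real.log x - Real.log b - (x - b)) x := by
    intro x hx
    have h1 : HasDerivAt (fun x : ℝ => x * Real.log x) (Real.log x + 1) x :=
      Real.hasDerivAt_mul_log (ne_of_gt hx)
    have h2 : HasDerivAt (fun x : ℝ => (Real.log b + 1) * (x - b)) (Real.log b + 1) x := by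
      simpa using (((hasDerivAt_id x).sub_const b).const_mul (Real.log b + 1))
    have h3 : HasDerivAt (fun x : ℝ => (x - b) ^ 2 / 2) (x - b) x := by
      have := (((hasDerivAt_id x).sub_const b).pow 2).div_const 2
      simpa using this
    have := ((h1.sub_const (b * Real.log b)).sub h2).sub h3
    have e : Real.log x - Real.log b - (x - b) = Real.log x + 1 - (Real.log b + 1) - (x - b) := by
      ring
    rw [e]; exact this
  have key : 0 ≤ F a := by
    rcases eq_or_lt_of_le ha0 with h0 | h0
    · -- a = 0
      have : F 0 = b - (b:ℝ) ^ 2 / 2 := by simp [hF]; ring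
      rw [← h0, this]; nlinarith
    rcases le_total b a with hba | hab
    · -- monotone on [b,1]
      have hmono : MonotoneOn F (Icc b 1) := by
        apply monotoneOn_of_deriv_nonneg (convex_Icc b 1)
        · intro x hx
          exact (hder x (lt_of_lt_of_le hb0 hx.1)).differentiableAt.continuousAt.continuousWithinAt
        · intro x hx
          rw [interior_Icc] at hx
          exact (hder x (lt_trans hb0 hx.1)).differentiableAt.differentiableWithinAt
        · intro x hx
          rw [interior_Icc] at hx
          rw [(hder x (lt_trans hb0 hx.1)).deriv]
          -- log x - log b ≥ (x-b)/x ≥ x - b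
          have hx0 : 0 < x := lt_trans hb0 hx.1
          have h1 : Real.log (b / x) ≤ b / x - 1 := Real.log_le_sub_one_of_pos (by positivity)
          rw [Real.log_div (ne_of_gt hb0) (ne_of_gt hx0)] at h1
          have h2 : (x - b) / x ≤ Real.log x - Real.log b := by
            have : b / x - 1 = -((x - b) / x) := by field_simp; ring
            linarith [h1.trans_eq this]
          have h3 : x - b ≤ (x - b) / x := by
            rw [le_div_iff₀ hx0]
            nlinarith [hx.2, hx.1, hb0]
          linarith
      have := hmono (left_mem_Icc.2 (le_trans hba ha1)) ⟨hba, ha1⟩ hba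
      rw [hFb] at this; exact this
    · -- antitone on [a,b]
      have hanti : AntitoneOn F (Icc a b) := by
        apply antitoneOn_of_deriv_nonpos (convex_Icc a b)
        · intro x hx
          exact (hder x (lt_of_lt_of_le h0 hx.1)).differentiableAt.continuousAt.continuousWithinAt
        · intro x hx
          rw [interior_Icc] at hx
          exact (hder x (lt_trans h0 hx.1)).differentiableAt.differentiableWithinAt
        · intro x hx
          rw [interior_Icc] at hx
          rw [(hder x (lt_trans h0 hx.1)).deriv]
          have hx0 : 0 < x := lt_trans h0 hx.1
          have h1 : Real.log (x / b) ≤ x / b - 1 := Real.log_le_sub_one_of_pos (by positivity)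
          rw [Real.log_div (ne_of_gt hx0) (ne_of_gt hb0)] at h1
          have h2 : Real.log x - Real.log b ≤ (x - b) / b := by
            have : x / b - 1 = (x - b) / b := by field_simp
            linarith [h1.trans_eq this]
          have h3 : (x - b) / b ≤ x - b := by
            rw [div_le_iff₀ hb0]
            nlinarith [hx.2, hb0]
          linarith
      have := hanti (left_mem_Icc.2 hab) (right_mem_Icc.2 hab) hab
      rw [hFb] at this; exact this
  simp only [hF] at key
  linarith

/-- Strong-convexity interpolation for x log x on [0,1]. -/
lemma mul_log_strong_interp {a p t : ℝ} (ha0 : 0 ≤ a) (ha1 : a ≤ 1)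
    (hp0 : 0 < p) (hp1 : p ≤ 1) (ht0 : 0 < t) (ht1 : t ≤ 1) :
    (a + t * (p - a)) * Real.log (a + t * (p - a)) ≤
      (1 - t) * (a * Real.log a) + t * (p * Real.log p) - t * (1 - t) * (p - a) ^ 2 / 2 := by
  set c : ℝ := a + t * (p - a) with hc
  have hc0 : 0 < c := by nlinarith
  have hc1 : c ≤ 1 := by nlinarith
  have h1 := mul_log_strong_tangent hc0 hc1 ha0 ha1
  have h2 := mul_log_strong_tangent hc0 hc1 hp0.le hp1
  have e1 : a - c = -(t * (p - a)) := by rw [hc]; ring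
  have e2 : p - c = (1 - t) * (p - a) := by rw [hc]; ring
  rw [e1] at h1
  rw [e2] at h2
  nlinarith [mul_le_mul_of_nonneg_left h1 (by linarith : (0:ℝ) ≤ 1 - t),
    mul_le_mul_of_nonneg_left h2 ht0.le]

section Aux

variable {n k : ℕ}

/-- The affine map `q ↦ Φq + b` blockwise. -/
def uu (Φ : Matrix (Fin n × Fin k) (Fin n × Fin k) ℝ) (b : Fin n → Fin k → ℝ)
    (q : Fin n → Fin k → ℝ) : Fin n → Fin k → ℝ :=
  fun i a => (∑ j, ∑ c, Φ (i, a) (j, c) * q j c) + b i a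

lemma sum_exp_pos (hk : 0 < k) (x : Fin k → ℝ) : 0 < ∑ a, Real.exp (x a) :=
  Finset.sum_pos (fun a _ => Real.exp_pos _) (by simp [Finset.univ_nonempty_iff, Fin.pos_iff_nonempty.mp hk])

lemma softmax_pos (hk : 0 < k) (x : Fin k → ℝ) (a : Fin k) : 0 < softmax x a :=
  div_pos (Real.exp_pos _) (sum_exp_pos hk x)

lemma softmax_le_one (hk : 0 < k) (x : Fin k → ℝ) (a : Fin k) : softmax x a ≤ 1 := by
  simp only [softmax]
  rw [div_le_one (sum_exp_pos hk x)]
  exact Finset.single_le_sum (fun c _ => (Real.exp_pos (x c)).le) (Finset.mem_univ a)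

lemma softmax_sum (hk : 0 < k) (x : Fin k → ℝ) : ∑ a, softmax x a = 1 := by
  simp only [softmax]
  rw [← Finset.sum_div, div_self (ne_of_gt (sum_exp_pos hk x))]

lemma softmax_mem (hk : 0 < k) (x : Fin k → ℝ) : softmax x ∈ simplex k :=
  ⟨fun a => (softmax_pos hk x a).le, softmax_sum hk x⟩

lemma log_softmax (hk : 0 < k) (x : Fin k → ℝ) (a : Fin k) :
    Real.log (softmax x a) = x a - Real.log (∑ c, Real.exp (x c)) := by
  simp only [softmax]
  rw [Real.log_div (Real.exp_ne_zero _) (ne_of_gt (sum_exp_pos hk x)), Real.log_exp]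

end Aux

section Uniq

variable {n k : ℕ}

/-- Uniqueness: two softmax fixed points coincide. -/
lemma fixedpoint_unique (hk : 0 < k) (m : ℝ) (hm : 0 < m)
    (Φ : Matrix (Fin n × Fin k) (Fin n × Fin k) ℝ)
    (hΦ : ∀ x : Fin n × Fin k → ℝ, m * (x ⬝ᵥ x) ≤ x ⬝ᵥ ((1 - Φ).mulVec x))
    (b : Fin n → Fin k → ℝ) (q q' : Fin n → Fin k → ℝ)
    (hq : ∀ i, q i = softmax (uu Φ b q i))
    (hq' : ∀ i, q' i = softmax (uu Φ b q' i)) : q = q' := by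
  set x : Fin n × Fin k → ℝ := fun p => q p.1 p.2 - q' p.1 p.2 with hx
  -- basic facts about coordinates
  have hq0 : ∀ i a, 0 < q i a := fun i a => by rw [hq i]; exact softmax_pos hk _ a
  have hq'0 : ∀ i a, 0 < q' i a := fun i a => by rw [hq' i]; exact softmax_pos hk _ a
  have hq1 : ∀ i a, q i a ≤ 1 := fun i a => by rw [hq i]; exact softmax_le_one hk _ a
  have hq'1 : ∀ i a, q' i a ≤ 1 := fun i a => by rw [hq' i]; exact softmax_le_one hk _ a
  have hqs : ∀ i, ∑ a, q i a = 1 := fun i => by rw [hq i]; exact softmax_sum hk _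
  have hq's : ∀ i, ∑ a, q' i a = 1 := fun i => by rw [hq' i]; exact softmax_sum hk _
  -- the quadratic form identity
  have hdot : x ⬝ᵥ (Φ.mulVec x) = ∑ i, ∑ a, x (i, a) * (uu Φ b q i a - uu Φ b q' i a) := by
    rw [dotProduct, Fintype.sum_prod_type]
    refine Finset.sum_congr rfl fun i _ => Finset.sum_congr rfl fun a _ => ?_
    congr 1
    simp only [mulVec, dotProduct, Fintype.sum_prod_type, uu]
    rw [add_sub_add_right_eq_sub, ← Finset.sum_sub_distrib]
    refine Finset.sum_congr rfl fun j _ => ?_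
    rw [← Finset.sum_sub_distrib]
    refine Finset.sum_congr rfl fun c _ => ?_
    simp only [hx]; ring
  -- u - u' = log q - log q' + blockwise constant
  have hlog : ∀ i a, uu Φ b q i a - uu Φ b q' i a =
      (Real.log (q i a) - Real.log (q' i a)) +
        (Real.log (∑ c, Real.exp (uu Φ b q i c)) - Real.log (∑ c, Real.exp (uu Φ b q' i c))) := by
    intro i a
    have h1 : Real.log (q i a) = uu Φ b q i a - Real.log (∑ c, Real.exp (uu Φ b q i c)) := by
      rw [hq i]; exact log_softmax hk _ a
    have h2 : Real.log (q' i a) = uu Φ b q' i a - Real.log (∑ c, Real.exp (uu Φ b q' i c)) := by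
      rw [hq' i]; exact log_softmax hk _ a
    rw [h1, h2]; ring
  -- strong monotonicity of ∑ x * (u - u')
  have hkey : x ⬝ᵥ x ≤ x ⬝ᵥ (Φ.mulVec x) := by
    rw [hdot, dotProduct, Fintype.sum_prod_type]
    refine Finset.sum_le_sum fun i _ => ?_
    have hsplit : ∑ a, x (i, a) * (uu Φ b q i a - uu Φ b q' i a) =
        (∑ a, x (i, a) * (Real.log (q i a) - Real.log (q' i a))) +
          (Real.log (∑ c, Real.exp (uu Φ b q i c)) - Real.log (∑ c, Real.exp (uu Φ b q' i c)))
            * ∑ a, x (i, a) := by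
      rw [Finset.mul_sum, ← Finset.sum_add_distrib]
      refine Finset.sum_congr rfl fun a _ => ?_
      rw [hlog i a]; ring
    have hxsum : ∑ a, x (i, a) = 0 := by
      simp only [hx, Finset.sum_sub_distrib, hqs i, hq's i, sub_self]
    rw [hsplit, hxsum, mul_zero, add_zero]
    refine Finset.sum_le_sum fun a _ => ?_
    have := log_strong_mono (hq0 i a) (hq1 i a) (hq'0 i a) (hq'1 i a)
    calc x (i, a) * x (i, a) = (q i a - q' i a) ^ 2 := by rw [hx]; ring
      _ ≤ (Real.log (q i a) - Real.log (q' i a)) * (q i a - q' i a) := this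
      _ = x (i, a) * (Real.log (q i a) - Real.log (q' i a)) := by rw [hx]; ring
  -- combine with hΦ
  have h1 := hΦ x
  rw [sub_mulVec, one_mulVec, dotProduct_sub] at h1
  have hxx : 0 ≤ x ⬝ᵥ x := by
    rw [dotProduct]
    exact Finset.sum_nonneg fun p _ => mul_self_nonneg _
  have hzero : x ⬝ᵥ x = 0 := by nlinarith
  funext i a
  have : ∀ p ∈ Finset.univ, x p * x p = 0 := by
    intro p _
    have h2 : ∀ p ∈ Finset.univ, (0:ℝ) ≤ x p * x p := fun p _ => mul_self_nonneg _
    exact (Finset.sum_eq_zero_iff_of_nonneg h2).mp hzero p (Finset.mem_univ p)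
  have h3 := this (i, a) (Finset.mem_univ _)
  have h4 : x (i, a) = 0 := by nlinarith
  simpa [hx, sub_eq_zero] using h4

end Uniq

section Exist

variable {n k : ℕ}

noncomputable def VV (Φ : Matrix (Fin n × Fin k) (Fin n × Fin k) ℝ)
    (b : Fin n → Fin k → ℝ) (q : Fin n → Fin k → ℝ) : ℝ :=
  (∑ i, Real.log (∑ a, Real.exp (uu Φ b q i a)))
    - (∑ i, ∑ a, uu Φ b q i a * q i a)
    + ∑ i, ∑ a, q i a * Real.log (q i a)

set_option maxHeartbeats 2000000 in
lemma fixedpoint_exists (hk : 0 < k) (m : ℝ) (hm : 0 < m)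
    (Φ : Matrix (Fin n × Fin k) (Fin n × Fin k) ℝ)
    (hΦ : ∀ x : Fin n × Fin k → ℝ, m * (x ⬝ᵥ x) ≤ x ⬝ᵥ ((1 - Φ).mulVec x))
    (b : Fin n → Fin k → ℝ) :
    ∃ q : Fin n → Fin k → ℝ, (∀ i, q i ∈ simplex k) ∧ ∀ i, q i = softmax (uu Φ b q i) := by
  classical
  have hsimp : simplex k = stdSimplex ℝ (Fin k) := rfl
  set K : Set (Fin n → Fin k → ℝ) := Set.univ.pi (fun _ => simplex k) with hK
  have hKc : IsCompact K := by
    rw [hK, hsimp]; exact isCompact_univ_pi fun _ => isCompact_stdSimplex ℝ _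
  have hkne : (k : ℝ) ≠ 0 := Nat.cast_ne_zero.mpr hk.ne'
  have hne : K.Nonempty := by
    refine ⟨fun _ _ => (k : ℝ)⁻¹, fun i _ => ⟨fun a => by positivity, ?_⟩⟩
    rw [Finset.sum_const, Finset.card_univ, Fintype.card_fin, nsmul_eq_mul, mul_inv_cancel₀ hkne]
  have hcoord : ∀ (j : Fin n) (c : Fin k), Continuous fun q : Fin n → Fin k → ℝ => q j c := by
    intro j c
    exact (continuous_apply c).comp (continuous_apply j)
  have hucont : ∀ i a, Continuous fun q : Fin n → Fin k → ℝ => uu Φ b q i a := by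
    intro i a
    apply Continuous.add _ continuous_const
    exact continuous_finset_sum _ fun j _ => continuous_finset_sum _ fun c _ =>
      continuous_const.mul (hcoord j c)
  have hVc : Continuous (VV Φ b) := by
    apply Continuous.add
    apply Continuous.sub
    · apply continuous_finset_sum; intro i _
      apply Continuous.log
      · exact continuous_finset_sum _ fun a _ => Real.continuous_exp.comp (hucont i a)
      · intro q; exact ne_of_gt (sum_exp_pos hk _)
    · exact continuous_finset_sum _ fun i _ => continuous_finset_sum _ fun a _ =>
        (hucont i a).mul (hcoord i a)
    · exact continuous_finset_sum _ fun i _ => continuous_finset_sum _ fun a _ =>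
        Real.continuous_mul_log.comp (hcoord i a)
  obtain ⟨q, hqK, hmin⟩ := hKc.exists_isMinOn hne hVc.continuousOn
  have hqmem : ∀ i, q i ∈ simplex k := fun i => hqK i (Set.mem_univ i)
  have hq0 : ∀ i a, 0 ≤ q i a := fun i a => (hqmem i).1 a
  have hqs : ∀ i, ∑ a, q i a = 1 := fun i => (hqmem i).2
  have hq1 : ∀ i a, q i a ≤ 1 := by
    intro i a
    calc q i a ≤ ∑ c, q i c := Finset.single_le_sum (fun c _ => hq0 i c) (Finset.mem_univ a)
      _ = 1 := hqs i
  set u : Fin n → Fin k → ℝ := uu Φ b q with hu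
  set Z : Fin n → ℝ := fun i => ∑ a, Real.exp (u i a) with hZdef
  have hZ : ∀ i, 0 < Z i := fun i => sum_exp_pos hk _
  set p : Fin n → Fin k → ℝ := fun i a => Real.exp (u i a) / Z i with hpdef
  have hp0 : ∀ i a, 0 < p i a := fun i a => div_pos (Real.exp_pos _) (hZ i)
  have hp1 : ∀ i a, p i a ≤ 1 := by
    intro i a
    rw [hpdef]
    rw [div_le_one (hZ i)]
    exact Finset.single_le_sum (fun c _ => (Real.exp_pos (u i c)).le) (Finset.mem_univ a)
  have hpe : ∀ i a, Real.exp (u i a) = p i a * Z i := by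
    intro i a
    rw [hpdef]
    exact (div_mul_cancel₀ _ (ne_of_gt (hZ i))).symm
  have hps : ∀ i, ∑ a, p i a = 1 := by
    intro i; rw [hpdef]
    rw [← Finset.sum_div, show (∑ a, Real.exp (u i a)) = Z i from rfl,
      div_self (ne_of_gt (hZ i))]
  set d : Fin n → Fin k → ℝ := fun i a => p i a - q i a with hd
  have hds : ∀ i, ∑ a, d i a = 0 := by
    intro i; simp only [hd, Finset.sum_sub_distrib, hps i, hqs i, sub_self]
  set v : Fin n → Fin k → ℝ := fun i a => ∑ j, ∑ c, Φ (i, a) (j, c) * d j c with hv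
  set D2 : ℝ := ∑ i, ∑ a, d i a ^ 2 with hD2
  have hD2nn : 0 ≤ D2 :=
    Finset.sum_nonneg fun i _ => Finset.sum_nonneg fun a _ => sq_nonneg _
  suffices hqp : ∀ i a, q i a = p i a by
    refine ⟨q, hqmem, fun i => ?_⟩
    funext a
    rw [hqp i a, hpdef]
    rfl
  by_contra hcon
  push_neg at hcon
  obtain ⟨i0, a0, hne0⟩ := hcon
  have hD2pos : 0 < D2 := by
    have h1 : 0 < d i0 a0 ^ 2 := by
      have hne' : d i0 a0 ≠ 0 := by
        simp only [hd]; intro h; exact hne0 (by linarith [sub_eq_zero.mp h])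
      exact (sq_nonneg _).lt_of_ne (Ne.symm (pow_ne_zero 2 hne'))
    have h2 : d i0 a0 ^ 2 ≤ ∑ a, d i0 a ^ 2 :=
      Finset.single_le_sum (f := fun a => d i0 a ^ 2) (fun a _ => sq_nonneg _)
        (Finset.mem_univ a0)
    have h3 : ∑ a, d i0 a ^ 2 ≤ D2 := by
      rw [hD2]
      exact Finset.single_le_sum (f := fun i => ∑ a, d i a ^ 2)
        (fun i _ => Finset.sum_nonneg fun a _ => sq_nonneg _) (Finset.mem_univ i0)
    linarith
  set R : ℝ := ∑ i, ∑ a, p i a * (v i a ^ 2 * Real.exp |v i a|) with hR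
  have hRnn : 0 ≤ R := Finset.sum_nonneg fun i _ => Finset.sum_nonneg fun a _ => by
    have := hp0 i a; exact mul_nonneg (hp0 i a).le (mul_nonneg (sq_nonneg _) (Real.exp_pos _).le)
  set S : ℝ := ∑ i, ∑ a, v i a * d i a with hS
  set C : ℝ := R + |S| + D2 / 2 with hC
  have hCnn : 0 ≤ C := by
    rw [hC]; have := abs_nonneg S; linarith
  set t : ℝ := min 1 (m * D2 / (2 * (C + 1))) with ht
  have hden : (0:ℝ) < 2 * (C + 1) := by linarith
  have ht0 : 0 < t := lt_min one_pos (div_pos (mul_pos hm hD2pos) hden)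
  have ht1 : t ≤ 1 := min_le_left _ _
  have ht2 : t ≤ m * D2 / (2 * (C + 1)) := min_le_right _ _
  set qt : Fin n → Fin k → ℝ := fun i a => q i a + t * d i a with hqt
  have hqtK : qt ∈ K := by
    intro i _
    constructor
    · intro a
      simp only [hqt, hd]
      nlinarith [hq0 i a, (hp0 i a).le, ht0.le, ht1]
    · simp only [hqt]
      rw [Finset.sum_add_distrib, ← Finset.mul_sum, hds i, mul_zero, add_zero]
      exact hqs i
  -- Step A: linear expansion of u along the segment
  have hut : ∀ i a, uu Φ b qt i a = u i a + t * v i a := by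
    intro i a
    simp only [uu, hu, hv, hqt]
    have inner : ∀ j, ∑ c, Φ (i, a) (j, c) * (q j c + t * d j c)
        = (∑ c, Φ (i, a) (j, c) * q j c) + t * ∑ c, Φ (i, a) (j, c) * d j c := by
      intro j
      rw [Finset.mul_sum, ← Finset.sum_add_distrib]
      exact Finset.sum_congr rfl fun c _ => by ring
    calc (∑ j, ∑ c, Φ (i, a) (j, c) * (q j c + t * d j c)) + b i a
        = (∑ j, ((∑ c, Φ (i, a) (j, c) * q j c) + t * ∑ c, Φ (i, a) (j, c) * d j c))
            + b i a := by rw [Finset.sum_congr rfl fun j _ => inner j]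
      _ = _ := by
          rw [Finset.sum_add_distrib, ← Finset.mul_sum]
          ring
  -- Step B: log-sum-exp bound
  have hlogZt : ∀ i, Real.log (∑ a, Real.exp (uu Φ b qt i a)) ≤
      Real.log (Z i) + t * (∑ a, p i a * v i a)
        + t ^ 2 * (∑ a, p i a * (v i a ^ 2 * Real.exp |v i a|)) := by
    intro i
    set W : ℝ := 1 + t * (∑ a, p i a * v i a)
        + t ^ 2 * (∑ a, p i a * (v i a ^ 2 * Real.exp |v i a|)) with hW
    have hsum_le : (∑ a, Real.exp (uu Φ b qt i a)) ≤ Z i * W := by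
      have step1 : ∀ a, Real.exp (uu Φ b qt i a) ≤
          Real.exp (u i a) * (1 + t * v i a + t ^ 2 * (v i a ^ 2 * Real.exp |v i a|)) := by
        intro a
        rw [hut i a, Real.exp_add]
        refine mul_le_mul_of_nonneg_left ?_ (Real.exp_pos _).le
        have h1 := exp_le_quad (t * v i a)
        have habs : |t * v i a| ≤ |v i a| := by
          rw [abs_mul, abs_of_pos ht0]
          nlinarith [abs_nonneg (v i a)]
        have hexp := Real.exp_le_exp.mpr habs
        have h2 : (t * v i a) ^ 2 * Real.exp |t * v i a| ≤
            t ^ 2 * (v i a ^ 2 * Real.exp |v i a|) := by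
          have e1 : (t * v i a) ^ 2 = t ^ 2 * v i a ^ 2 := by ring
          rw [e1, mul_assoc]
          refine mul_le_mul_of_nonneg_left ?_ (sq_nonneg t)
          exact mul_le_mul_of_nonneg_left hexp (sq_nonneg _)
        linarith
      calc ∑ a, Real.exp (uu Φ b qt i a)
          ≤ ∑ a, Real.exp (u i a) * (1 + t * v i a + t ^ 2 * (v i a ^ 2 * Real.exp |v i a|)) :=
            Finset.sum_le_sum fun a _ => step1 a
        _ = Z i * W := by
            rw [Finset.sum_congr rfl fun a (_ : a ∈ Finset.univ) =>
              show Real.exp (u i a) * (1 + t * v i a + t ^ 2 * (v i a ^ 2 * Real.exp |v i a|)) =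
                Z i * (p i a + t * (p i a * v i a)
                  + t ^ 2 * (p i a * (v i a ^ 2 * Real.exp |v i a|))) by rw [hpe i a]; ring]
            rw [← Finset.mul_sum]
            congr 1
            rw [Finset.sum_add_distrib, Finset.sum_add_distrib, ← Finset.mul_sum, ← Finset.mul_sum,
              hps i, hW]
    have hpos : 0 < ∑ a, Real.exp (uu Φ b qt i a) := sum_exp_pos hk _
    have hWpos : 0 < W := by
      have hZi := hZ i
      nlinarith
    calc Real.log (∑ a, Real.exp (uu Φ b qt i a)) ≤ Real.log (Z i * W) :=
          Real.log_le_log hpos hsum_le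
      _ = Real.log (Z i) + Real.log W := Real.log_mul (ne_of_gt (hZ i)) (ne_of_gt hWpos)
      _ ≤ Real.log (Z i) + (W - 1) := by linarith [Real.log_le_sub_one_of_pos hWpos]
      _ = _ := by rw [hW]; ring
  -- Step C: bilinear term exact expansion
  have hbil : ∑ i, ∑ a, uu Φ b qt i a * qt i a =
      (∑ i, ∑ a, u i a * q i a)
        + t * ((∑ i, ∑ a, u i a * d i a) + (∑ i, ∑ a, v i a * q i a)) + t ^ 2 * S := by
    rw [Finset.sum_congr rfl fun i (_ : i ∈ Finset.univ) =>
      Finset.sum_congr rfl fun a (_ : a ∈ Finset.univ) =>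
        show uu Φ b qt i a * qt i a =
          u i a * q i a + t * (u i a * d i a + v i a * q i a) + t ^ 2 * (v i a * d i a) by
          rw [hut i a]; simp only [hqt]; ring]
    have ex : ∀ i, ∑ a, (u i a * q i a + t * (u i a * d i a + v i a * q i a)
        + t ^ 2 * (v i a * d i a))
        = (∑ a, u i a * q i a) + t * ((∑ a, u i a * d i a) + (∑ a, v i a * q i a))
          + t ^ 2 * (∑ a, v i a * d i a) := by
      intro i
      simp only [Finset.sum_add_distrib, ← Finset.mul_sum]
    rw [Finset.sum_congr rfl fun i (_ : i ∈ Finset.univ) => ex i]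
    simp only [Finset.sum_add_distrib, ← Finset.mul_sum]
    rfl
  -- Step D: entropy bound
  have hld : ∀ i, ∑ a, (Real.log (p i a) + 1) * d i a = ∑ a, u i a * d i a := by
    intro i
    have hlogp : ∀ a, Real.log (p i a) = u i a - Real.log (Z i) := by
      intro a
      rw [hpdef]
      rw [Real.log_div (Real.exp_ne_zero _) (ne_of_gt (hZ i)), Real.log_exp]
    rw [Finset.sum_congr rfl fun a (_ : a ∈ Finset.univ) =>
      show (Real.log (p i a) + 1) * d i a
        = u i a * d i a + (1 - Real.log (Z i)) * d i a by rw [hlogp a]; ring]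
    rw [Finset.sum_add_distrib, ← Finset.mul_sum, hds i, mul_zero, add_zero]
  have hent : ∑ i, ∑ a, qt i a * Real.log (qt i a) ≤
      (∑ i, ∑ a, q i a * Real.log (q i a)) + t * (∑ i, ∑ a, u i a * d i a)
        - (t / 2) * D2 - (t * (1 - t) / 2) * D2 := by
    have hpoint : ∀ i a, qt i a * Real.log (qt i a) ≤
        q i a * Real.log (q i a) + t * ((Real.log (p i a) + 1) * d i a)
          - (t / 2) * d i a ^ 2 - (t * (1 - t) / 2) * d i a ^ 2 := by
      intro i a
      have h1 := mul_log_strong_interp (hq0 i a) (hq1 i a) (hp0 i a) (hp1 i a) ht0 ht1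
      have h2 := mul_log_strong_tangent (hp0 i a) (hp1 i a) (hq0 i a) (hq1 i a)
      have h2' := mul_le_mul_of_nonneg_left h2 ht0.le
      simp only [hqt, hd]
      nlinarith [h1, h2']
    calc ∑ i, ∑ a, qt i a * Real.log (qt i a)
        ≤ ∑ i, ∑ a, (q i a * Real.log (q i a) + t * ((Real.log (p i a) + 1) * d i a)
            - (t / 2) * d i a ^ 2 - (t * (1 - t) / 2) * d i a ^ 2) :=
          Finset.sum_le_sum fun i _ => Finset.sum_le_sum fun a _ => hpoint i a
      _ = _ := by
          have ex : ∀ i, ∑ a, (q i a * Real.log (q i a) + t * ((Real.log (p i a) + 1) * d i a)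
              - (t / 2) * d i a ^ 2 - (t * (1 - t) / 2) * d i a ^ 2)
              = (∑ a, q i a * Real.log (q i a)) + t * (∑ a, u i a * d i a)
                - (t / 2) * (∑ a, d i a ^ 2) - (t * (1 - t) / 2) * (∑ a, d i a ^ 2) := by
            intro i
            simp only [Finset.sum_sub_distrib, Finset.sum_add_distrib, ← Finset.mul_sum]
            rw [hld i]
          rw [Finset.sum_congr rfl fun i (_ : i ∈ Finset.univ) => ex i]
          simp only [Finset.sum_sub_distrib, Finset.sum_add_distrib, ← Finset.mul_sum]
          rfl
  -- Step F: quadratic form bound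
  have hSle : S ≤ (1 - m) * D2 := by
    have h := hΦ (fun pr => d pr.1 pr.2)
    rw [sub_mulVec, one_mulVec, dotProduct_sub] at h
    have e1 : (fun pr : Fin n × Fin k => d pr.1 pr.2) ⬝ᵥ (fun pr => d pr.1 pr.2) = D2 := by
      rw [dotProduct, Fintype.sum_prod_type, hD2]
      exact Finset.sum_congr rfl fun i _ => Finset.sum_congr rfl fun a _ => (sq (d i a)).symm
    have e2 : (fun pr : Fin n × Fin k => d pr.1 pr.2) ⬝ᵥ
        (Φ.mulVec fun pr => d pr.1 pr.2) = S := by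
      rw [dotProduct, Fintype.sum_prod_type, hS]
      refine Finset.sum_congr rfl fun i _ => Finset.sum_congr rfl fun a _ => ?_
      simp only [mulVec, dotProduct, Fintype.sum_prod_type, hv]
      ring
    rw [e1, e2] at h
    linarith
  -- Step E: combine into a bound on VV qt
  have hpv : (∑ i, ∑ a, p i a * v i a) - (∑ i, ∑ a, v i a * q i a) = S := by
    rw [hS, ← Finset.sum_sub_distrib]
    refine Finset.sum_congr rfl fun i _ => ?_
    rw [← Finset.sum_sub_distrib]
    refine Finset.sum_congr rfl fun a _ => ?_
    simp only [hd]
    ring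
  have hVt : VV Φ b qt ≤ VV Φ b q + t * (S - D2) + t ^ 2 * C := by
    have hlog_sum : ∑ i, Real.log (∑ a, Real.exp (uu Φ b qt i a)) ≤
        (∑ i, Real.log (Z i)) + t * (∑ i, ∑ a, p i a * v i a) + t ^ 2 * R := by
      calc ∑ i, Real.log (∑ a, Real.exp (uu Φ b qt i a))
          ≤ ∑ i, (Real.log (Z i) + t * (∑ a, p i a * v i a)
              + t ^ 2 * (∑ a, p i a * (v i a ^ 2 * Real.exp |v i a|))) :=
            Finset.sum_le_sum fun i _ => hlogZt i
        _ = _ := by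
            simp only [Finset.sum_add_distrib, ← Finset.mul_sum]
            rfl
    have hVq : VV Φ b q = (∑ i, Real.log (Z i)) - (∑ i, ∑ a, u i a * q i a)
        + ∑ i, ∑ a, q i a * Real.log (q i a) := by
      rw [VV]
    have hVqt : VV Φ b qt = (∑ i, Real.log (∑ a, Real.exp (uu Φ b qt i a)))
        - (∑ i, ∑ a, uu Φ b qt i a * qt i a) + ∑ i, ∑ a, qt i a * Real.log (qt i a) := rfl
    rw [hVqt, hbil, hVq]
    have habs : -S ≤ |S| := neg_le_abs S
    have ht2nn : (0:ℝ) ≤ t ^ 2 := sq_nonneg t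
    have hq2 : t ^ 2 * (-S) ≤ t ^ 2 * |S| := mul_le_mul_of_nonneg_left habs ht2nn
    rw [hC]
    nlinarith [hent, hlog_sum, hpv, sq_nonneg t, hD2nn]
  -- Step G: contradiction with minimality
  have hfin : VV Φ b qt < VV Φ b q := by
    have h1 : S - D2 ≤ -(m * D2) := by linarith
    have h2 : t * (S - D2) ≤ t * (-(m * D2)) := mul_le_mul_of_nonneg_left h1 ht0.le
    have h3 : t * C ≤ m * D2 / 2 := by
      have := mul_le_mul_of_nonneg_right ht2 hCnn
      have hC1 : 0 < C + 1 := by linarith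
      rw [div_mul_eq_mul_div, le_div_iff₀ (by linarith : (0:ℝ) < 2 * (C + 1))] at this
      rw [le_div_iff₀ (by norm_num : (0:ℝ) < 2)]
      nlinarith [mul_nonneg (mul_nonneg hm.le hD2nn) hCnn]
    have h4 : t ^ 2 * C ≤ t * (m * D2 / 2) := by
      have : t ^ 2 * C = t * (t * C) := by ring
      rw [this]
      exact mul_le_mul_of_nonneg_left h3 ht0.le
    have h5 : t * (m * D2 / 2) < t * (m * D2) := by
      refine mul_lt_mul_of_pos_left ?_ ht0
      nlinarith
    have hpos6 : 0 < t * (m * D2) := mul_pos ht0 (mul_pos hm hD2pos)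
    calc VV Φ b qt ≤ VV Φ b q + t * (S - D2) + t ^ 2 * C := hVt
      _ ≤ VV Φ b q + t * -(m * D2) + t * (m * D2 / 2) := by linarith [h2, h4]
      _ = VV Φ b q - t * (m * D2) / 2 := by ring
      _ < VV Φ b q := by linarith [hpos6]
  have := (isMinOn_iff.mp hmin) qt hqtK
  linarith

end Exist


theorem stmt4 {n k : ℕ} (hn : 0 < n) (hk : 0 < k) (m : ℝ) (hm : 0 < m)
    (Φ : Matrix (Fin n × Fin k) (Fin n × Fin k) ℝ)
    (hΦ : ∀ x : Fin n × Fin k → ℝ, m * (x ⬝ᵥ x) ≤ x ⬝ᵥ ((1 - Φ).mulVec x))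
    (b : Fin n → Fin k → ℝ) :
    ∃! q : Fin n → Fin k → ℝ,
      (∀ i, q i ∈ simplex k) ∧
      ∀ i, q i = softmax (fun a => (∑ j, ∑ c, Φ (i, a) (j, c) * q j c) + b i a) := by
  obtain ⟨q, hqm, hqfix⟩ := fixedpoint_exists hk m hm Φ hΦ b
  refine ⟨q, ⟨hqm, fun i => hqfix i⟩, ?_⟩
  rintro q' ⟨hq'm, hq'fix⟩
  exact fixedpoint_unique hk m hm Φ hΦ b q' q (fun i => hq'fix i) (fun i => hqfix i)
end

section
/- For every x ∈ ℝ^k, softmax(x) lies in Δ_k and is the unique minimizer over z ∈ Δ_k of the function (1/2)‖x − z‖₂² + Σ_i z_i log z_i − (1/2)‖z‖₂²; that is, softmax(x) = prox_f^1(x) for f(z) = Σ_i z_i log z_i − (1/2)‖z‖₂² restricted to the simplex. -/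
/-- The objective `(1/2)‖x − z‖₂² + Σ_i z_i log z_i − (1/2)‖z‖₂²` whose unique minimizer
over the simplex is `softmax x`.  (Note `Real.log 0 = 0`, giving the convention
`0 · log 0 = 0`.) -/
noncomputable def obj {k : ℕ} (x z : Fin k → ℝ) : ℝ :=
  (1 / 2) * ∑ i, (x i - z i) ^ 2 + ∑ i, z i * Real.log (z i) - (1 / 2) * ∑ i, (z i) ^ 2

lemma key_le {a t : ℝ} (ha : 0 < a) (ht : 0 ≤ t) :
    t - a ≤ t * Real.log t - t * Real.log a := by
  rcases ht.eq_or_lt with h | h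
  · rw [← h]; simp; linarith
  · have h2 := Real.log_le_sub_one_of_pos (div_pos ha h)
    rw [Real.log_div ha.ne' h.ne'] at h2
    have h3 := mul_le_mul_of_nonneg_left h2 h.le
    have h4 : t * (a / t - 1) = a - t := by field_simp
    nlinarith

lemma key_lt {a t : ℝ} (ha : 0 < a) (ht : 0 ≤ t) (hne : t ≠ a) :
    t - a < t * Real.log t - t * Real.log a := by
  rcases ht.eq_or_lt with h | h
  · rw [← h]; simp; linarith
  · have hx : a / t ≠ 1 := by
      intro hh
      apply hne
      field_simp at hh
      linarith
    have h2 := Real.log_lt_sub_one_of_pos (div_pos ha h) hx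
    rw [Real.log_div ha.ne' h.ne'] at h2
    have h3 := mul_lt_mul_of_pos_left h2 h
    have h4 : t * (a / t - 1) = a - t := by field_simp
    nlinarith

theorem stmt5 {k : ℕ} (hk : 0 < k) (x : Fin k → ℝ) :
    softmax x ∈ simplex k ∧
    ∀ z ∈ simplex k, z ≠ softmax x → obj x (softmax x) < obj x z := by
  set S := ∑ j, Real.exp (x j) with hSdef
  have hS : 0 < S :=
    Finset.sum_pos (fun j _ => Real.exp_pos _) ⟨⟨0, hk⟩, Finset.mem_univ _⟩
  set s := softmax x with hsdef
  have hs_pos : ∀ i, 0 < s i := fun i => div_pos (Real.exp_pos _) hS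
  have hs_sum : ∑ i, s i = 1 := by
    rw [hsdef]
    unfold softmax
    rw [← Finset.sum_div]
    exact div_self hS.ne'
  refine ⟨⟨fun i => (hs_pos i).le, hs_sum⟩, ?_⟩
  intro z hz hne
  obtain ⟨hz0, hz1⟩ := hz
  have hlog : ∀ i, Real.log (s i) = x i - Real.log S := by
    intro i
    rw [hsdef]
    unfold softmax
    rw [Real.log_div (Real.exp_ne_zero _) hS.ne', Real.log_exp]
  have hobj : ∀ w : Fin k → ℝ,
      obj x w = (1/2) * ∑ i, (x i)^2 + ∑ i, (w i * Real.log (w i) - x i * w i) := by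
    intro w
    unfold obj
    have h1 : ∑ i, (x i - w i)^2
        = ∑ i, (x i)^2 - 2 * ∑ i, x i * w i + ∑ i, (w i)^2 := by
      rw [Finset.sum_congr rfl (fun i _ => by ring :
        ∀ i ∈ Finset.univ, (x i - w i)^2 = (x i)^2 - 2*(x i * w i) + (w i)^2),
        Finset.sum_add_distrib, Finset.sum_sub_distrib, ← Finset.mul_sum]
    have h2 : ∑ i, (w i * Real.log (w i) - x i * w i)
        = ∑ i, w i * Real.log (w i) - ∑ i, x i * w i := Finset.sum_sub_distrib _ _
    rw [h1, h2]; ring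
  rw [hobj z, hobj s]
  have hA : ∑ i, (s i * Real.log (s i) - x i * s i) = - Real.log S := by
    rw [Finset.sum_congr rfl (fun i _ => by rw [hlog i]; ring :
      ∀ i ∈ Finset.univ, s i * Real.log (s i) - x i * s i = - Real.log S * s i),
      ← Finset.mul_sum, hs_sum, mul_one]
  have hB : ∑ i, (z i * Real.log (z i) - x i * z i)
      = ∑ i, (z i * Real.log (z i) - z i * Real.log (s i)) - Real.log S := by
    rw [Finset.sum_congr rfl (fun i _ => by rw [hlog i]; ring :
      ∀ i ∈ Finset.univ, z i * Real.log (z i) - x i * z i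
        = (z i * Real.log (z i) - z i * Real.log (s i)) - Real.log S * z i),
      Finset.sum_sub_distrib, ← Finset.mul_sum, hz1, mul_one]
  have hKL : ∑ i, (z i - s i) < ∑ i, (z i * Real.log (z i) - z i * Real.log (s i)) := by
    obtain ⟨i0, hi0⟩ : ∃ i, z i ≠ s i := by
      by_contra h
      push_neg at h
      exact hne (funext h)
    exact Finset.sum_lt_sum (fun i _ => key_le (hs_pos i) (hz0 i))
      ⟨i0, Finset.mem_univ i0, key_lt (hs_pos i0) (hz0 i0) hi0⟩
  rw [Finset.sum_sub_distrib, hz1, hs_sum] at hKL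
  rw [hA, hB]
  linarith
end

section
/- The function f(z) = Σ_{i=1}^k z_i log z_i − (1/2)‖z‖₂² is convex on the probability simplex Δ_k. -/
lemma key_convex : ConvexOn ℝ (Set.Icc (0:ℝ) 1)
    (fun t : ℝ => t * Real.log t - t ^ 2 / 2) := by
  have hint : interior (Set.Icc (0:ℝ) 1) = Set.Ioo 0 1 := interior_Icc
  refine convexOn_of_hasDerivWithinAt2_nonneg (convex_Icc 0 1)
    (f' := fun t => Real.log t + 1 - t) (f'' := fun t => 1 / t - 1)
    ?_ ?_ ?_ ?_
  · exact (Real.continuous_mul_log.sub (by continuity)).continuousOn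
  · intro x hx
    rw [hint] at hx
    have hx0 : x ≠ 0 := ne_of_gt hx.1
    have h1 : HasDerivAt (fun t : ℝ => t * Real.log t) (Real.log x + 1) x := by
      have := (hasDerivAt_id' (x := x)).mul (Real.hasDerivAt_log hx0)
      exact this.congr_deriv (by simp [mul_inv_cancel₀ hx0, add_comm])
    have h2 : HasDerivAt (fun t : ℝ => t ^ 2 / 2) x x := by
      have := (hasDerivAt_pow 2 x).div_const 2
      simpa using this
    exact ((h1.sub h2).hasDerivWithinAt)
  · intro x hx
    rw [hint] at hx
    have hx0 : x ≠ 0 := ne_of_gt hx.1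
    have h1 : HasDerivAt (fun t : ℝ => Real.log t + 1 - t) (1 / x - 1) x := by
      have := ((Real.hasDerivAt_log hx0).add_const 1).sub (hasDerivAt_id' (x := x))
      exact this.congr_deriv (by simp [one_div])
    exact h1.hasDerivWithinAt
  · intro x hx
    rw [hint] at hx
    have : (1:ℝ) ≤ 1 / x := by
      rw [le_div_iff₀ hx.1]
      simpa using hx.2.le
    linarith

lemma simplex_convex (k : ℕ) : Convex ℝ (simplex k) := by
  intro x hx y hy a b ha hb hab
  refine ⟨fun i => add_nonneg (mul_nonneg ha (hx.1 i)) (mul_nonneg hb (hy.1 i)), ?_⟩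
  simp only [Pi.add_apply, Pi.smul_apply, smul_eq_mul]
  rw [Finset.sum_add_distrib, ← Finset.mul_sum, ← Finset.mul_sum, hx.2, hy.2]
  simpa using hab

lemma simplex_subset (k : ℕ) (i : Fin k) :
    simplex k ⊆ {z : Fin k → ℝ | z i ∈ Set.Icc (0:ℝ) 1} := by
  intro z hz
  refine ⟨hz.1 i, ?_⟩
  calc z i ≤ ∑ j, z j := Finset.single_le_sum (fun j _ => hz.1 j) (Finset.mem_univ i)
    _ = 1 := hz.2

theorem stmt6 {k : ℕ} :
    ConvexOn ℝ (simplex k)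
      (fun z : Fin k → ℝ => ∑ i, z i * Real.log (z i) - (1 / 2) * ∑ i, (z i) ^ 2) := by
  have heq : (fun z : Fin k → ℝ => ∑ i, z i * Real.log (z i) - (1 / 2) * ∑ i, (z i) ^ 2)
      = fun z : Fin k → ℝ => ∑ i, (z i * Real.log (z i) - (z i) ^ 2 / 2) := by
    funext z
    rw [Finset.sum_sub_distrib, Finset.mul_sum]
    congr 1
    apply Finset.sum_congr rfl
    intro i _
    ring
  rw [heq]
  have hc : ∀ i : Fin k, ConvexOn ℝ (simplex k)
      (fun z : Fin k → ℝ => z i * Real.log (z i) - (z i) ^ 2 / 2) := by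
    intro i
    refine ⟨simplex_convex k, ?_⟩
    intro x hx y hy a b ha hb hab
    have hxi := simplex_subset k i hx
    have hyi := simplex_subset k i hy
    have := key_convex.2 hxi hyi ha hb hab
    simpa using this
  classical
  have hsum : ∀ (s : Finset (Fin k)), ConvexOn ℝ (simplex k)
      (fun z : Fin k → ℝ => ∑ i ∈ s, (z i * Real.log (z i) - (z i) ^ 2 / 2)) := by
    intro s
    induction s using Finset.induction_on with
    | empty => simpa using convexOn_const 0 (simplex_convex k)
    | insert _ _ hni ih =>
      simp only [Finset.sum_insert hni]
      exact (hc _).add ih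
  exact hsum Finset.univ
end

section
/- For every α ∈ (0,1) and x ∈ ℝ^k, there exists a unique λ ∈ ℝ such that Σ_{i=1}^k s_α(x_i − α + λ) = 1, where s_α is the inverse of φ_α(z) = (1−α)z + α log z. -/
/-!
Since `φ_α` is strictly increasing on `(0, ∞)`, its right inverse `s_α` is strictly increasing
with range exactly `(0, ∞)`; a monotone map with open range is continuous. Hence
`λ ↦ ∑ i, s_α (x i - α + λ)` is continuous and strictly increasing, it drops below `1` once every
term is at most `1 / k`, and it exceeds `1` once a single term equals `1`; the intermediate value
theorem gives a solution and strict monotonicity its uniqueness.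
-/

open Set

theorem Monotone.continuous_of_isOpen_range {α β : Type*} [LinearOrder α] [TopologicalSpace α]
    [OrderTopology α] [LinearOrder β] [TopologicalSpace β] [OrderTopology β] [DenselyOrdered β]
    {f : α → β} (h_mono : Monotone f) (h_open : IsOpen (range f)) : Continuous f :=
  continuous_iff_continuousAt.mpr fun a =>
    continuousAt_of_monotoneOn_of_image_mem_nhds (fun _ _ _ _ hxy => h_mono hxy) Filter.univ_mem
      (by rw [image_univ]; exact h_open.mem_nhds (mem_range_self a))

section RightInverse

variable {α β : Type*} [LinearOrder α] [LinearOrder β] {φ : α → β} {s : β → α} {t : Set α}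

theorem StrictMonoOn.strictMono_of_rightInverse (hφ : StrictMonoOn φ t) (hst : ∀ y, s y ∈ t)
    (hφs : ∀ y, φ (s y) = y) : StrictMono s := fun y₁ y₂ h => by
  by_contra! hle
  have := hφ.monotoneOn (hst y₂) (hst y₁) hle
  rw [hφs, hφs] at this
  exact this.not_gt h

theorem StrictMonoOn.range_rightInverse (hφ : StrictMonoOn φ t) (hst : ∀ y, s y ∈ t)
    (hφs : ∀ y, φ (s y) = y) : range s = t :=
  Subset.antisymm (range_subset_iff.mpr hst) fun z hz =>
    ⟨φ z, hφ.injOn (hst (φ z)) hz (hφs (φ z))⟩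

end RightInverse

theorem strictMonoOn_logLinear {α : ℝ} (hα : α ∈ Icc (0 : ℝ) 1) :
    StrictMonoOn (fun z => (1 - α) * z + α * Real.log z) (Ioi 0) := by
  intro z₁ hz₁ z₂ _ h
  have hlog := Real.log_lt_log hz₁ h
  obtain ⟨hα₀, hα₁⟩ := hα
  dsimp only
  rcases hα₀.eq_or_lt with rfl | hα₀
  · linarith
  · nlinarith

theorem existsUnique_sum_comp_add_eq {ι : Type*} [Fintype ι] [Nonempty ι] {g : ℝ → ℝ}
    (hg : StrictMono g) (hg_range : range g = Ioi 0) (x : ι → ℝ) {c : ℝ} (hc : 0 < c) :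
    ∃! lam : ℝ, ∑ i, g (x i + lam) = c := by
  set F : ℝ → ℝ := fun lam => ∑ i, g (x i + lam)
  have hg_pos : ∀ y, 0 < g y := fun y => hg_range.le (mem_range_self y)
  have hF_mono : StrictMono F := fun l₁ l₂ h =>
    Finset.sum_lt_sum_of_nonempty Finset.univ_nonempty fun i _ => hg (by linarith)
  have hF_cont : Continuous F :=
    continuous_finsetSum _ fun i _ =>
      (hg.monotone.continuous_of_isOpen_range (hg_range ▸ isOpen_Ioi)).comp
        (continuous_const.add continuous_id)
  have hF_le : ∃ a, F a ≤ c := by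
    obtain ⟨y, hy⟩ : c / Fintype.card ι ∈ range g := by
      rw [hg_range]; exact div_pos hc (Nat.cast_pos.mpr Fintype.card_pos)
    obtain ⟨i₀, hi₀⟩ := Finite.exists_max x
    refine ⟨y - x i₀, ?_⟩
    calc F (y - x i₀) ≤ ∑ _i : ι, c / Fintype.card ι :=
          Finset.sum_le_sum fun i _ => hy ▸ hg.monotone (by linarith [hi₀ i])
      _ = c := by simp only [Finset.sum_const, Finset.card_univ, nsmul_eq_mul]; field_simp
  have hF_ge : ∃ b, c ≤ F b := by
    obtain ⟨y, hy⟩ : c ∈ range g := hg_range ▸ hc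
    obtain ⟨i₀⟩ := ‹Nonempty ι›
    refine ⟨y - x i₀, ?_⟩
    calc c = g (x i₀ + (y - x i₀)) := by rw [add_sub_cancel, hy]
      _ ≤ F (y - x i₀) :=
          Finset.single_le_sum (f := fun i => g (x i + (y - x i₀))) (fun i _ => (hg_pos _).le)
            (Finset.mem_univ i₀)
  obtain ⟨lam, hlam⟩ := mem_range_of_exists_le_of_exists_ge hF_cont hF_le hF_ge
  exact ⟨lam, hlam, fun l hl => hF_mono.injective (hl.trans hlam.symm)⟩

theorem stmt12 {k : ℕ} (hk : 0 < k) (α : ℝ) (hα : α ∈ Set.Ioo (0 : ℝ) 1)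
    (x : Fin k → ℝ) (s : ℝ → ℝ)
    (hs_pos : ∀ y, 0 < s y)
    (hs_inv : ∀ y, (1 - α) * s y + α * Real.log (s y) = y) :
    ∃! lam : ℝ, ∑ i, s (x i - α + lam) = 1 := by
  have hφ := strictMonoOn_logLinear (Ioo_subset_Icc_self hα)
  have : Nonempty (Fin k) := ⟨⟨0, hk⟩⟩
  exact existsUnique_sum_comp_add_eq (hφ.strictMono_of_rightInverse hs_pos hs_inv)
    (hφ.range_rightInverse hs_pos hs_inv) (fun i => x i - α) one_pos
end
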